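/- For the modified Bessel function of the first kind I_p(κ) with κ > 0 and nonnegative integer p, the inequality 0 ≤ I_{p+1}(κ)/I_p(κ) ≤ κ/(2(p+1)) holds; consequently, for any fixed positive integer τ, I_{p+τ}(κ)/I_p(κ) → 0 as p → ∞. -/
import Mathlib

open Real Filter

/-- The modified Bessel function of the first kind of nonnegative integer order. -/
noncomputable def besselI (p : ℕ) (κ : ℝ) : ℝ :=
  ∑' r : ℕ, (κ / 2) ^ (2 * r + p) / ((p + r).factorial * r.factorial)

lemma besselI_summable (p : ℕ) {κ : ℝ} (hκ : 0 < κ) :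
    Summable fun r : ℕ => (κ / 2) ^ (2 * r + p) / ((p + r).factorial * r.factorial) := by
  have hg : Summable fun r : ℕ => (κ / 2) ^ p * (((κ / 2) ^ 2) ^ r / r.factorial) :=
    (Real.summable_pow_div_factorial ((κ / 2) ^ 2)).mul_left _
  refine Summable.of_nonneg_of_le (fun r => by positivity) (fun r => ?_) hg
  have key : (κ / 2) ^ (2 * r + p) = (κ / 2) ^ p * ((κ / 2) ^ 2) ^ r := by
    rw [← pow_mul, ← pow_add]; ring_nf
  rw [key, mul_div_assoc]
  gcongr
  exact le_mul_of_one_le_left (by positivity)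
    (by exact_mod_cast Nat.one_le_iff_ne_zero.mpr (Nat.factorial_ne_zero _))

lemma besselI_pos (p : ℕ) {κ : ℝ} (hκ : 0 < κ) : 0 < besselI p κ := by
  apply Summable.tsum_pos (besselI_summable p hκ) (fun r => by positivity) 0
  positivity

lemma besselI_succ_le (p : ℕ) {κ : ℝ} (hκ : 0 < κ) :
    besselI (p + 1) κ ≤ κ / (2 * (p + 1)) * besselI p κ := by
  have hs := besselI_summable p hκ
  rw [besselI, besselI, ← tsum_mul_left]
  apply Summable.tsum_le_tsum _ (besselI_summable (p + 1) hκ) (hs.mul_left _)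
  intro r
  have h1 : (p + 1 + r).factorial = (p + r + 1) * (p + r).factorial := by
    rw [show p + 1 + r = p + r + 1 by ring, Nat.factorial_succ]
  rw [h1, show 2 * r + (p + 1) = (2 * r + p) + 1 by ring, pow_succ]
  push_cast
  rw [show (κ/2)^(2*r+p) * (κ/2) / ((↑p+↑r+1) * ↑(p+r).factorial * ↑r.factorial)
      = κ / (2*((p:ℝ)+(r:ℝ)+1)) * ((κ/2)^(2*r+p) / (↑(p+r).factorial * ↑r.factorial)) from by
    field_simp]
  gcongr
  linarith [Nat.cast_nonneg (α := ℝ) r]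

/-- Ratio bound for modified Bessel functions and the consequent vanishing of
`I_{p+τ}(κ)/I_p(κ)` as `p → ∞`. -/
theorem besselI_ratio_bound (κ : ℝ) (hκ : 0 < κ) :
    (∀ p : ℕ, 0 ≤ besselI (p + 1) κ / besselI p κ ∧
        besselI (p + 1) κ / besselI p κ ≤ κ / (2 * (p + 1))) ∧
    ∀ τ : ℕ, 0 < τ →
      Tendsto (fun p : ℕ => besselI (p + τ) κ / besselI p κ) atTop (nhds 0) := by
  have hpos : ∀ p : ℕ, 0 < besselI p κ := fun p => besselI_pos p hκ
  have hstep := fun p => besselI_succ_le p (κ := κ) hκ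
  have hiter : ∀ τ p : ℕ, besselI (p + τ) κ ≤ (κ / (2 * (p + 1))) ^ τ * besselI p κ := by
    intro τ
    induction τ with
    | zero => intro p; simp
    | succ n ih =>
      intro p
      have h1 : besselI (p + (n+1)) κ ≤ κ / (2 * ((p + n : ℕ) + 1)) * besselI (p + n) κ := by
        have := hstep (p + n); simpa [show p + (n+1) = p + n + 1 by ring] using this
      have h2 : κ / (2 * ((p + n : ℕ) + 1)) ≤ κ / (2 * (p + 1)) := by
        apply div_le_div_of_nonneg_left hκ.le (by positivity)
        push_cast; linarith
      calc besselI (p + (n+1)) κ ≤ κ / (2 * ((p + n : ℕ) + 1)) * besselI (p + n) κ := h1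
        _ ≤ κ / (2 * (p + 1)) * ((κ / (2 * (p + 1))) ^ n * besselI p κ) := by
            apply mul_le_mul h2 (ih p) (hpos _).le (by positivity)
        _ = (κ / (2 * (p + 1))) ^ (n+1) * besselI p κ := by ring
  constructor
  · intro p
    refine ⟨div_nonneg (hpos _).le (hpos _).le, ?_⟩
    rw [div_le_iff₀ (hpos p)]
    simpa using hiter 1 p
  · intro τ hτ
    have hlim : Tendsto (fun p : ℕ => (κ / (2 * ((p:ℝ) + 1))) ^ τ) atTop (nhds 0) := by
      have hd : Tendsto (fun p : ℕ => 2 * ((p:ℝ) + 1)) atTop atTop := by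
        apply Tendsto.const_mul_atTop (by norm_num : (0:ℝ) < 2)
        exact tendsto_atTop_add_const_right atTop 1 tendsto_natCast_atTop_atTop
      have h0 : Tendsto (fun p : ℕ => κ / (2 * ((p:ℝ) + 1))) atTop (nhds 0) :=
        Tendsto.div_atTop tendsto_const_nhds hd
      simpa [zero_pow hτ.ne'] using h0.pow τ
    apply squeeze_zero (fun p => div_nonneg (hpos _).le (hpos _).le) _ hlim
    intro p
    rw [div_le_iff₀ (hpos p)]
    exact hiter τ p
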